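/- arXiv:1912.11104 — 4 statements merged into one kernel-verified Lean document; each statement's English description precedes it below -/
import Mathlib

section
/- If G is a graph of the tetrahedral model maximizing the number of faces among all graphs with the same number of bubbles, and G has a proper face of length 2 of color c, then G consists of two bubbles joined by a color-c 'dipole' pattern with the remaining four vertices pairwise connected through 2-point functions: vertices v_1,v_2 (and likewise v_3,v_4) adjacent via color-c edges to the face are connected to each other by a 2-point function. -/
/-!  A combinatorial model of the Feynman graphs of the rank-3 tetrahedral
(`O(N)^3`) tensor model.

A graph consists of a finite set `B` of bubbles (copies of the tetrahedron
`K_4`); each bubble has four vertices, so the vertex set is `B × Fin 4`.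
Inside every bubble the edges of colors `1,2,3` are given once and for all by
the three fixed-point-free involutions of `Fin 4` (the proper 3-edge-coloring
of `K_4`).  The color-0 propagator edges, one per vertex, are encoded by a
fixed-point-free involution `pairing` of the vertex set. -/

open Equiv

/-- The color-`c` (for `c ∈ {1,2,3}`, here `c : Fin 3`) perfect matching on the
four vertices of a tetrahedral bubble. -/
def bubblePerm : Fin 3 → Equiv.Perm (Fin 4) :=
  ![Equiv.swap 0 1 * Equiv.swap 2 3,
    Equiv.swap 0 2 * Equiv.swap 1 3,
    Equiv.swap 0 3 * Equiv.swap 1 2]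

/-- A Feynman graph of the tetrahedral tensor model: a finite set of `K_4`
bubbles together with a fixed-point-free involution of the vertex set
describing the color-0 edges. -/
structure TGraph where
  B : Type
  [fintypeB : Fintype B]
  [decB : DecidableEq B]
  pairing : Equiv.Perm (B × Fin 4)
  invol : ∀ v, pairing (pairing v) = v
  fixfree : ∀ v, pairing v ≠ v

attribute [instance] TGraph.fintypeB TGraph.decB

namespace TGraph

/-- The vertex set of a graph. -/
abbrev V (G : TGraph) : Type := G.B × Fin 4

/-- The permutation of the vertices given by the color-`c` edges inside the
bubbles. -/
def colPerm (G : TGraph) (c : Fin 3) : Equiv.Perm G.V :=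
  (Equiv.refl G.B).prodCongr (bubblePerm c)

/-- The number of bubbles of a graph. -/
def b (G : TGraph) : ℕ := Fintype.card G.B

/-- The subgroup of permutations of the vertices generated by the color-0
pairing and the color-`c` matching: its orbits are exactly the faces of
color `c` (cycles alternating colors `0` and `c`). -/
def faceGroup (G : TGraph) (c : Fin 3) : Subgroup (Equiv.Perm G.V) :=
  Subgroup.closure {G.pairing, G.colPerm c}

/-- Two vertices lie on the same face of color `c`. -/
def sameFace (G : TGraph) (c : Fin 3) (u v : G.V) : Prop :=
  u ∈ MulAction.orbit (G.faceGroup c) v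

/-- The number of faces of color `c` of the graph. -/
noncomputable def numFaces (G : TGraph) (c : Fin 3) : ℕ :=
  Nat.card (MulAction.orbitRel.Quotient (G.faceGroup c) G.V)

/-- The total number of faces of the graph. -/
noncomputable def F (G : TGraph) : ℕ := ∑ c : Fin 3, G.numFaces c

/-- The length of the face of color `c` through the vertex `v` (a face of
length `n` consists of `n` color-0 edges and `n` color-`c` edges, hence `2n`
vertices). -/
noncomputable def faceLength (G : TGraph) (c : Fin 3) (v : G.V) : ℕ :=
  Nat.card (MulAction.orbit (G.faceGroup c) v) / 2

/-- The subgroup generated by all edges of the graph. -/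
def fullGroup (G : TGraph) : Subgroup (Equiv.Perm G.V) :=
  Subgroup.closure ({G.pairing} ∪ Set.range G.colPerm)

/-- A graph is connected if any vertex can be reached from any other one along
its edges. -/
def Connected (G : TGraph) : Prop :=
  ∀ u v : G.V, u ∈ MulAction.orbit G.fullGroup v

/-- One step along an edge of the graph avoiding the color-0 edges whose
endpoints belong to `S`. -/
def stepAvoiding (G : TGraph) (S : Set G.V) (u v : G.V) : Prop :=
  (∃ c, v = G.colPerm c u) ∨ (v = G.pairing u ∧ u ∉ S ∧ v ∉ S)

/-- Reachability in the graph with the color-0 edges meeting `S` removed. -/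
def reachAvoiding (G : TGraph) (S : Set G.V) : G.V → G.V → Prop :=
  Relation.ReflTransGen (G.stepAvoiding S)

/-- The pair of color-0 edges through the vertices `u` and `w` disconnects the
graph when removed.  Together with the requirement that the two edges be
distinct, this is the notion of a 2-edge-cut of color-0 edges. -/
def CutDisconnects (G : TGraph) (u w : G.V) : Prop :=
  ¬ ∀ x y : G.V, G.reachAvoiding {u, G.pairing u, w, G.pairing w} x y

/-- Two vertices are connected by a 2-point function if they are joined by a
color-0 edge, or if their two (distinct) color-0 edges form a 2-edge-cut. -/
def TwoPoint (G : TGraph) (x y : G.V) : Prop :=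
  G.pairing x = y ∨ (y ≠ x ∧ y ≠ G.pairing x ∧ G.CutDisconnects x y)

/-- The flip of the two color-0 edges `{u, pairing u}` and `{w, pairing w}`
(assumed distinct) which reconnects `u` with `w` (and `pairing u` with
`pairing w`): the pairing is conjugated by the transposition exchanging
`pairing u` and `w`.  The other flip of this pair of edges is
`G.flip u (G.pairing w)`. -/
def flip (G : TGraph) (u w : G.V) : TGraph where
  B := G.B
  pairing := Equiv.swap (G.pairing u) w * G.pairing * Equiv.swap (G.pairing u) w
  invol := by
    intro v
    simp only [Equiv.Perm.mul_apply, Equiv.swap_apply_self, G.invol]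
  fixfree := by
    intro v h
    simp only [Equiv.Perm.mul_apply] at h
    have h' : G.pairing (Equiv.swap (G.pairing u) w v) = Equiv.swap (G.pairing u) w v := by
      have := congrArg (Equiv.swap (G.pairing u) w) h
      simpa using this
    exact G.fixfree _ h'

/-- The face of color `c` through the color-0 edge `{v, pairing v}` has
length 2 (it consists of this edge, a color-`c` edge, a second color-0 edge
and a second color-`c` edge closing the cycle). -/
def FaceLen2 (G : TGraph) (c : Fin 3) (v : G.V) : Prop :=
  G.pairing v ≠ G.colPerm c v ∧
    G.pairing (G.colPerm c (G.pairing v)) = G.colPerm c v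

/-- A proper face of length 2 of color `c` through `v`: a face of length 2
whose two color-0 edges connect two distinct bubbles. -/
def ProperFace2 (G : TGraph) (c : Fin 3) (v : G.V) : Prop :=
  G.FaceLen2 c v ∧ (G.pairing v).1 ≠ v.1

/-- A graph maximizes the number of faces if it is connected and no connected
graph with the same number of bubbles has more faces. -/
def MaximizesFaces (G : TGraph) : Prop :=
  G.Connected ∧ ∀ H : TGraph, H.Connected → H.b = G.b → H.F ≤ G.F

/-- Isomorphisms of graphs: bijections of the vertex sets commuting with the
color-0 pairing and with the colored matchings inside the bubbles. -/
structure Iso (G H : TGraph) where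
  toEquiv : G.V ≃ H.V
  map_pairing : ∀ v, toEquiv (G.pairing v) = H.pairing (toEquiv v)
  map_col : ∀ c v, toEquiv (G.colPerm c v) = H.colPerm c (toEquiv v)

/-- Two graphs are isomorphic. -/
def IsIso (G H : TGraph) : Prop := Nonempty (Iso G H)

end TGraph

open TGraph

/-- The leading-order two-bubble graph `G_2`: two tetrahedral bubbles with
corresponding vertices joined by four color-0 edges, so that all six faces
have length 2. -/
def G2 : TGraph where
  B := Fin 2
  pairing := (Equiv.swap (0 : Fin 2) 1).prodCongr (Equiv.refl (Fin 4))
  invol := by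
    rintro ⟨i, k⟩
    simp [Equiv.prodCongr_apply, Equiv.swap_apply_self]
  fixfree := by
    rintro ⟨i, k⟩ h
    have hi : Equiv.swap (0 : Fin 2) 1 i = i := congrArg Prod.fst h
    fin_cases i <;> simp_all

/-- The double tadpole `G_1^{(c)}`: one tetrahedral bubble whose two color-0
edges each join two vertices already adjacent by an edge of color `c`. -/
def G1 (c : Fin 3) : TGraph where
  B := Fin 1
  pairing := (Equiv.refl (Fin 1)).prodCongr (bubblePerm c)
  invol := by
    rintro ⟨i, k⟩
    have hk : ∀ j : Fin 4, bubblePerm c (bubblePerm c j) = j := by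
      fin_cases c <;> decide
    simp [Equiv.prodCongr_apply, hk]
  fixfree := by
    rintro ⟨i, k⟩ h
    have hk : bubblePerm c k = k := congrArg Prod.snd h
    have hne : ∀ j : Fin 4, bubblePerm c j ≠ j := by
      fin_cases c <;> decide
    exact hne k hk

namespace TGraph

variable (H K : TGraph)

/-- The image of a vertex of `H` in the glued graph. -/
def inlV (x : H.V) : (H.B ⊕ K.B) × Fin 4 := (Sum.inl x.1, x.2)

/-- The image of a vertex of `K` in the glued graph. -/
def inrV (y : K.V) : (H.B ⊕ K.B) × Fin 4 := (Sum.inr y.1, y.2)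

/-- The underlying function of the pairing of the graph obtained by gluing `H`
and `K` along the color-0 edges `{p, H.pairing p}` and `{q, K.pairing q}`:
these two edges are cut and the half-edges are reglued as `p — q` and
`H.pairing p — K.pairing q`.  The new pair of edges is a 2-edge-cut of the
resulting graph when `H` and `K` are connected. -/
def glueFun (p : H.V) (q : K.V) : (H.B ⊕ K.B) × Fin 4 → (H.B ⊕ K.B) × Fin 4 :=
  fun z =>
    match z with
    | (Sum.inl u, k) =>
        if (u, k) = p then inrV H K q
        else if (u, k) = H.pairing p then inrV H K (K.pairing q)
        else inlV H K (H.pairing (u, k))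
    | (Sum.inr u, k) =>
        if (u, k) = q then inlV H K p
        else if (u, k) = K.pairing q then inlV H K (H.pairing p)
        else inrV H K (K.pairing (u, k))

theorem glueFun_inlV (p : H.V) (q : K.V) (x : H.V) :
    glueFun H K p q (inlV H K x) =
      if x = p then inrV H K q
      else if x = H.pairing p then inrV H K (K.pairing q)
      else inlV H K (H.pairing x) := by
  cases x
  rfl

theorem glueFun_inrV (p : H.V) (q : K.V) (y : K.V) :
    glueFun H K p q (inrV H K y) =
      if y = q then inlV H K p
      else if y = K.pairing q then inlV H K (H.pairing p)
      else inrV H K (K.pairing y) := by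
  cases y
  rfl

theorem inlV_injective : Function.Injective (inlV H K) := by
  rintro ⟨u, k⟩ ⟨u', k'⟩ h
  have h1 : (Sum.inl u : H.B ⊕ K.B) = Sum.inl u' := congrArg Prod.fst h
  have h2 : k = k' := congrArg Prod.snd h
  exact Prod.ext (Sum.inl_injective h1) h2

theorem inrV_injective : Function.Injective (inrV H K) := by
  rintro ⟨u, k⟩ ⟨u', k'⟩ h
  have h1 : (Sum.inr u : H.B ⊕ K.B) = Sum.inr u' := congrArg Prod.fst h
  have h2 : k = k' := congrArg Prod.snd h
  exact Prod.ext (Sum.inr_injective h1) h2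

theorem inlV_ne_inrV (x : H.V) (y : K.V) : inlV H K x ≠ inrV H K y := by
  intro h
  exact Sum.inl_ne_inr (congrArg Prod.fst h)

theorem glueFun_invol_inl (p : H.V) (q : K.V) (x : H.V) :
    glueFun H K p q (glueFun H K p q (inlV H K x)) = inlV H K x := by
  rw [glueFun_inlV]
  by_cases h1 : x = p
  · rw [if_pos h1, glueFun_inrV, if_pos rfl, h1]
  · by_cases h2 : x = H.pairing p
    · rw [if_neg h1, if_pos h2, glueFun_inrV,
        if_neg (fun h => K.fixfree q h), if_pos rfl, h2]
    · have hne1 : H.pairing x ≠ p := by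
        intro h; apply h2
        have := congrArg H.pairing h
        rw [H.invol] at this; exact this
      have hne2 : H.pairing x ≠ H.pairing p := fun h => h1 (H.pairing.injective h)
      rw [if_neg h1, if_neg h2, glueFun_inlV, if_neg hne1, if_neg hne2, H.invol]

theorem glueFun_invol_inr (p : H.V) (q : K.V) (y : K.V) :
    glueFun H K p q (glueFun H K p q (inrV H K y)) = inrV H K y := by
  rw [glueFun_inrV]
  by_cases h1 : y = q
  · rw [if_pos h1, glueFun_inlV, if_pos rfl, h1]
  · by_cases h2 : y = K.pairing q
    · rw [if_neg h1, if_pos h2, glueFun_inlV,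
        if_neg (fun h => H.fixfree p h), if_pos rfl, h2]
    · have hne1 : K.pairing y ≠ q := by
        intro h; apply h2
        have := congrArg K.pairing h
        rw [K.invol] at this; exact this
      have hne2 : K.pairing y ≠ K.pairing q := fun h => h1 (K.pairing.injective h)
      rw [if_neg h1, if_neg h2, glueFun_inrV, if_neg hne1, if_neg hne2, K.invol]

theorem glueFun_involutive (p : H.V) (q : K.V) :
    Function.Involutive (glueFun H K p q) := by
  rintro ⟨(u | u), k⟩
  · exact glueFun_invol_inl H K p q (u, k)
  · exact glueFun_invol_inr H K p q (u, k)

theorem glueFun_fixfree (p : H.V) (q : K.V) :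
    ∀ z, glueFun H K p q z ≠ z := by
  have hl : ∀ x : H.V, glueFun H K p q (inlV H K x) ≠ inlV H K x := by
    intro x h
    rw [glueFun_inlV] at h
    by_cases h1 : x = p
    · rw [if_pos h1] at h
      exact inlV_ne_inrV H K x q h.symm
    · by_cases h2 : x = H.pairing p
      · rw [if_neg h1, if_pos h2] at h
        exact inlV_ne_inrV H K x (K.pairing q) h.symm
      · rw [if_neg h1, if_neg h2] at h
        exact H.fixfree x (inlV_injective H K h)
  have hr : ∀ y : K.V, glueFun H K p q (inrV H K y) ≠ inrV H K y := by
    intro y h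
    rw [glueFun_inrV] at h
    by_cases h1 : y = q
    · rw [if_pos h1] at h
      exact inlV_ne_inrV H K p y h
    · by_cases h2 : y = K.pairing q
      · rw [if_neg h1, if_pos h2] at h
        exact inlV_ne_inrV H K (H.pairing p) y h
      · rw [if_neg h1, if_neg h2] at h
        exact K.fixfree y (inrV_injective H K h)
  rintro ⟨(u | u), k⟩
  · exact hl (u, k)
  · exact hr (u, k)

/-- Gluing two graphs along a pair of color-0 edges.  When `H` and `K` are
connected, the two new color-0 edges form a 2-edge-cut of the glued graph, and
conversely every connected graph with a color-0 2-edge-cut arises this way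
from the two closed graphs obtained by cutting the two edges and closing each
side. -/
def glue (p : H.V) (q : K.V) : TGraph where
  B := H.B ⊕ K.B
  pairing := (glueFun_involutive H K p q).toPerm
  invol := fun v => glueFun_involutive H K p q v
  fixfree := fun v => glueFun_fixfree H K p q v

/-- Insertion of a melonic dipole (the 2-point graph obtained by cutting one
color-0 edge of `G_2`) on the color-0 edge `{v, G.pairing v}` of `G`. -/
def insertDipole (G : TGraph) (v : G.V) : TGraph :=
  glue G G2 v ((0 : Fin 2), (0 : Fin 4))

end TGraph

open TGraph

/-- Melonic graphs (up to isomorphism): `G_2` is melonic, and inserting a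
melonic dipole on any color-0 edge of a melonic graph yields a melonic
graph. -/
inductive IsMelonic : TGraph → Prop
  | base {G : TGraph} (h : IsIso G G2) : IsMelonic G
  | insert {G : TGraph} (hG : IsMelonic G) (v : G.V) {H : TGraph}
      (h : IsIso H (G.insertDipole v)) : IsMelonic H

/-- Double tadpoles decorated with melonic 2-point functions (up to
isomorphism): these are exactly the graphs obtained from one of the double
tadpoles `G_1^{(c)}` by repeatedly inserting melonic dipoles on color-0 edges,
i.e. double tadpoles whose two color-0 edges are replaced by melonic 2-point
functions. -/
inductive IsDecoratedTadpole : TGraph → Prop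
  | base {G : TGraph} (c : Fin 3) (h : IsIso G (G1 c)) : IsDecoratedTadpole G
  | insert {G : TGraph} (hG : IsDecoratedTadpole G) (v : G.V) {H : TGraph}
      (h : IsIso H (G.insertDipole v)) : IsDecoratedTadpole H

/-!
Let `w = pairing v`, and let `x`, `y` be the color-`c'` neighbours of `v` and `w`.  If `x` and `y`
were not joined by a 2-point function, the flip reconnecting `x` with `y` (and `pairing x` with
`pairing y`) would keep the graph connected, since the two edges do not form a 2-edge-cut.  The
flip closes the length-2 face `x v w y` of color `c'` and, through the third color `c''` which
maps the color-`c` neighbours `a, b` of `v, w` to `x, y`, the length-2 face `x a b y` of color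
`c''`; each of these colors gains a face, while color `c` loses at most one.  So the flip has more
faces than `G`, against maximality.
-/

open MulAction

section OrbitCounting

variable {α G H : Type*} [Group G] [Group H] [MulAction G α] [MulAction H α]

theorem MulAction.natCard_orbitRel_quotient_eq_ncard_range_orbit :
    Nat.card (orbitRel.Quotient G α) = (Set.range (orbit G : α → Set α)).ncard := by
  rw [← Set.ncard_range_of_injective orbitRel.Quotient.orbit_injective,
    ← Quotient.mk''_surjective.range_comp]
  rfl

variable [Finite α] {U : Set α}

theorem MulAction.ncard_range_orbit_eq_add (hU : ∀ z ∈ U, orbit G z ⊆ U) :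
    (Set.range (orbit G : α → Set α)).ncard =
      (orbit G '' U).ncard + (orbit G '' Uᶜ).ncard := by
  rw [← Set.image_univ, ← Set.union_compl_self U, Set.image_union]
  refine Set.ncard_union_eq ?_ (Set.toFinite _) (Set.toFinite _)
  rw [Set.disjoint_left]
  rintro _ ⟨z, hz, rfl⟩ ⟨z', hz', hzz'⟩
  exact hz' (hU z hz (hzz' ▸ mem_orbit_self z'))

theorem MulAction.ncard_range_orbit_add_eq (hU : ∀ z ∈ U, orbit G z ⊆ U)
    (hGH : ∀ z ∈ U, orbit G z = orbit H z) :
    (Set.range (orbit G : α → Set α)).ncard + (orbit H '' Uᶜ).ncard =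
      (Set.range (orbit H : α → Set α)).ncard + (orbit G '' Uᶜ).ncard := by
  rw [ncard_range_orbit_eq_add hU, ncard_range_orbit_eq_add fun z hz => hGH z hz ▸ hU z hz,
    Set.image_congr hGH]
  omega

end OrbitCounting

section PermOrbits

variable {α : Type*} {s : Set (Perm α)}

theorem MulAction.apply_mem_orbit_closure {g : Perm α} (hg : g ∈ s) {u z : α}
    (hu : u ∈ orbit (Subgroup.closure s) z) : g u ∈ orbit (Subgroup.closure s) z :=
  mem_orbit_of_mem_orbit ⟨g, Subgroup.subset_closure hg⟩ hu

theorem MulAction.orbit_closure_subset_of_involutive {T : Set α}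
    (hinv : ∀ g ∈ s, Function.Involutive g) (hs : ∀ g ∈ s, ∀ z ∈ T, g z ∈ T) {z : α}
    (hz : z ∈ T) :
    orbit (Subgroup.closure s) z ⊆ T := by
  rintro _ ⟨⟨g, hg⟩, rfl⟩
  show g z ∈ T
  induction hg using Subgroup.closure_induction'' generalizing z with
  | mem g hg => exact hs g hg z hz
  | inv_mem g hg =>
    rw [Perm.inv_eq_iff_eq.mpr (hinv g hg z).symm]
    exact hs g hg z hz
  | one => exact hz
  | mul g g' _ _ ih ih' => exact ih (ih' hz)

end PermOrbits

lemma Fin.sum_univ_three_of_ne {M : Type*} [AddCommMonoid M] (f : Fin 3 → M) {i j k : Fin 3}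
    (hij : i ≠ j) (hik : i ≠ k) (hjk : j ≠ k) : ∑ l, f l = f i + f j + f k := by
  have huniv : {i, j, k} = (Finset.univ : Finset (Fin 3)) :=
    Finset.eq_univ_of_card _ (Finset.card_eq_three.mpr ⟨i, j, k, hij, hik, hjk, rfl⟩)
  rw [← huniv, Finset.sum_insert (by simp [hij, hik]), Finset.sum_pair hjk, add_assoc]

namespace TGraph

lemma bubblePerm_involutive (d : Fin 3) : Function.Involutive (bubblePerm d) := by
  intro k; revert d k; decide

lemma bubblePerm_ne_self (d : Fin 3) (k : Fin 4) : bubblePerm d k ≠ k := by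
  revert d k; decide

/-- The three matchings together with the identity form a Klein four-group. -/
lemma exists_bubblePerm_mul_eq {c c' : Fin 3} (h : c' ≠ c) :
    ∃ c'', c'' ≠ c ∧ c'' ≠ c' ∧ bubblePerm c'' * bubblePerm c = bubblePerm c' := by
  revert c c'; decide

variable (G : TGraph)

lemma colPerm_apply (d : Fin 3) (z : G.V) : G.colPerm d z = (z.1, bubblePerm d z.2) := rfl

lemma colPerm_involutive (d : Fin 3) : Function.Involutive (G.colPerm d) := fun z => by
  simp [colPerm_apply, bubblePerm_involutive d z.2]

lemma colPerm_ne_self (d : Fin 3) (z : G.V) : G.colPerm d z ≠ z := fun h =>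
  bubblePerm_ne_self d z.2 (congrArg Prod.snd h)

lemma colPerm_colPerm_of_mul_eq {d d' d'' : Fin 3}
    (h : bubblePerm d'' * bubblePerm d = bubblePerm d') (z : G.V) :
    G.colPerm d'' (G.colPerm d z) = G.colPerm d' z := by
  simp [colPerm_apply, ← h]

variable {G}

lemma pairing_mem_orbit {d : Fin 3} {u z : G.V} (hu : u ∈ orbit (G.faceGroup d) z) :
    G.pairing u ∈ orbit (G.faceGroup d) z :=
  apply_mem_orbit_closure (by simp) hu

lemma colPerm_mem_orbit {d : Fin 3} {u z : G.V} (hu : u ∈ orbit (G.faceGroup d) z) :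
    G.colPerm d u ∈ orbit (G.faceGroup d) z :=
  apply_mem_orbit_closure (by simp) hu

lemma orbit_faceGroup_subset {d : Fin 3} {T : Set G.V} (hp : ∀ u ∈ T, G.pairing u ∈ T)
    (hc : ∀ u ∈ T, G.colPerm d u ∈ T) {z : G.V} (hz : z ∈ T) :
    orbit (G.faceGroup d) z ⊆ T :=
  orbit_closure_subset_of_involutive
    (by rintro g (rfl | rfl); exacts [G.invol, G.colPerm_involutive d])
    (by rintro g (rfl | rfl); exacts [hp, hc]) hz

lemma numFaces_eq_ncard_range_orbit (d : Fin 3) :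
    G.numFaces d = (Set.range (orbit (G.faceGroup d) : G.V → Set G.V)).ncard :=
  natCard_orbitRel_quotient_eq_ncard_range_orbit

variable {x y : G.V}

def flipEnds (G : TGraph) (x y : G.V) : Set G.V := {x, G.pairing x, y, G.pairing y}

def faceClosure (G : TGraph) (d : Fin 3) (S : Set G.V) : Set G.V :=
  {z | ∃ u ∈ S, G.sameFace d u z}

lemma flip_pairing_left (hxy : x ≠ y) : (G.flip x y).pairing x = y := by
  show swap (G.pairing x) y (G.pairing (swap (G.pairing x) y x)) = y
  rw [swap_apply_of_ne_of_ne (G.fixfree x).symm hxy, swap_apply_left]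

lemma flip_pairing_right (hxy : x ≠ y) : (G.flip x y).pairing y = x := by
  show swap (G.pairing x) y (G.pairing (swap (G.pairing x) y y)) = x
  rw [swap_apply_right, G.invol, swap_apply_of_ne_of_ne (G.fixfree x).symm hxy]

lemma flip_pairing_of_not_mem {u : G.V} (hu : u ∉ G.flipEnds x y) :
    (G.flip x y).pairing u = G.pairing u := by
  simp only [flipEnds, Set.mem_insert_iff, Set.mem_singleton_iff, not_or] at hu
  obtain ⟨hux, hupx, huy, hupy⟩ := hu
  show swap (G.pairing x) y (G.pairing (swap (G.pairing x) y u)) = G.pairing u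
  rw [swap_apply_of_ne_of_ne hupx huy, swap_apply_of_ne_of_ne
    (fun h => hux (G.pairing.injective h)) (fun h => hupy (by rw [← h, G.invol]))]

/-- `(G.flip x y).V` is `G.V` only up to unfolding `flip`; this instance lets the faces of the
flip be compared with those of `G` as sets of vertices of `G`. -/
instance (G : TGraph) (x y : G.V) (d : Fin 3) : MulAction ((G.flip x y).faceGroup d) G.V :=
  inferInstanceAs (MulAction ((G.flip x y).faceGroup d) (G.flip x y).V)

lemma orbit_flip_subset {d : Fin 3} {T : Set G.V} (hp : ∀ u ∈ T, (G.flip x y).pairing u ∈ T)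
    (hc : ∀ u ∈ T, G.colPerm d u ∈ T) {z : G.V} (hz : z ∈ T) :
    orbit ((G.flip x y).faceGroup d) z ⊆ T :=
  (G.flip x y).orbit_faceGroup_subset hp hc hz

lemma orbit_flip_eq {d : Fin 3} {z : G.V} (hz : z ∉ G.faceClosure d (G.flipEnds x y)) :
    orbit ((G.flip x y).faceGroup d) z = orbit (G.faceGroup d) z := by
  set O := orbit (G.faceGroup d) z
  have hagree : ∀ u ∈ O, (G.flip x y).pairing u = G.pairing u :=
    fun u hu => flip_pairing_of_not_mem fun hu' => hz ⟨u, hu', hu⟩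
  have hsub : orbit ((G.flip x y).faceGroup d) z ⊆ O :=
    orbit_flip_subset (fun u hu => (hagree u hu).symm ▸ pairing_mem_orbit hu)
      (fun u hu => colPerm_mem_orbit hu) (mem_orbit_self z)
  refine hsub.antisymm (orbit_faceGroup_subset (fun u hu => ?_) (fun u hu => ?_) (mem_orbit_self z))
  · rw [← hagree u (hsub hu)]
    exact (G.flip x y).pairing_mem_orbit hu
  · exact (G.flip x y).colPerm_mem_orbit (d := d) hu

variable (x y)

lemma numFaces_add_ncard_image_faceClosure (d : Fin 3) :
    G.numFaces d + (orbit ((G.flip x y).faceGroup d) '' G.faceClosure d (G.flipEnds x y)).ncard =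
      (G.flip x y).numFaces d +
        (orbit (G.faceGroup d) '' G.faceClosure d (G.flipEnds x y)).ncard := by
  have key := ncard_range_orbit_add_eq (U := (G.faceClosure d (G.flipEnds x y))ᶜ)
    (G := G.faceGroup d) (H := (G.flip x y).faceGroup d) ?_ fun z hz => (orbit_flip_eq hz).symm
  · rw [compl_compl] at key
    rw [numFaces_eq_ncard_range_orbit, numFaces_eq_ncard_range_orbit]
    exact key
  · rintro z hz u hu ⟨s, hs, hsu⟩
    refine hz ⟨s, hs, ?_⟩
    rw [sameFace, ← orbit_eq_iff.mpr hu]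
    exact hsu

lemma image_orbit_faceClosure_flipEnds_subset (d : Fin 3) :
    orbit (G.faceGroup d) '' G.faceClosure d (G.flipEnds x y) ⊆
      {orbit (G.faceGroup d) x, orbit (G.faceGroup d) y} := by
  rintro _ ⟨z, ⟨u, hu, hzu⟩, rfl⟩
  have hz : orbit (G.faceGroup d) z = orbit (G.faceGroup d) u := (orbit_eq_iff.mpr hzu).symm
  rcases hu with rfl | rfl | rfl | rfl
  · exact Or.inl hz
  · exact Or.inl (hz.trans (orbit_eq_iff.mpr (pairing_mem_orbit (mem_orbit_self x))))
  · exact Or.inr hz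
  · exact Or.inr (hz.trans (orbit_eq_iff.mpr (pairing_mem_orbit (mem_orbit_self y))))

lemma numFaces_le_numFaces_flip_add_one (d : Fin 3) :
    G.numFaces d ≤ (G.flip x y).numFaces d + 1 := by
  have key := numFaces_add_ncard_image_faceClosure x y d
  have hG := (Set.ncard_le_ncard (image_orbit_faceClosure_flipEnds_subset x y d)).trans
    (Set.ncard_insert_le _ _)
  rw [Set.ncard_singleton] at hG
  have hflip : 0 < (orbit ((G.flip x y).faceGroup d) '' G.faceClosure d (G.flipEnds x y)).ncard :=
    (Set.ncard_pos (Set.toFinite _)).mpr ⟨_, x, ⟨x, Or.inl rfl, mem_orbit_self x⟩, rfl⟩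
  omega

variable {x y}

lemma numFaces_add_one_le_numFaces_flip {d : Fin 3} (hsame : G.sameFace d y x)
    (hsplit : ¬ (G.flip x y).sameFace d (G.pairing x) x) :
    G.numFaces d + 1 ≤ (G.flip x y).numFaces d := by
  have key := numFaces_add_ncard_image_faceClosure x y d
  have hG : (orbit (G.faceGroup d) '' G.faceClosure d (G.flipEnds x y)).ncard ≤ 1 := by
    have h := image_orbit_faceClosure_flipEnds_subset x y d
    rw [orbit_eq_iff.mpr hsame, Set.pair_eq_singleton] at h
    simpa using Set.ncard_le_ncard h
  have hflip :
      2 ≤ (orbit ((G.flip x y).faceGroup d) '' G.faceClosure d (G.flipEnds x y)).ncard := by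
    have hne :
        orbit ((G.flip x y).faceGroup d) x ≠ orbit ((G.flip x y).faceGroup d) (G.pairing x) :=
      fun h => hsplit (show G.pairing x ∈ orbit ((G.flip x y).faceGroup d) x from
        h ▸ mem_orbit_self (G.pairing x))
    rw [← Set.ncard_pair hne]
    refine Set.ncard_le_ncard ?_ (Set.toFinite _)
    rintro _ (rfl | rfl)
    · exact ⟨x, ⟨x, Or.inl rfl, mem_orbit_self x⟩, rfl⟩
    · exact ⟨G.pairing x, ⟨G.pairing x, Or.inr (Or.inl rfl), mem_orbit_self _⟩, rfl⟩
  omega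

variable {d : Fin 3} {p q : G.V}

lemma orbit_flip_subset_of_pairing_eq (hpq : G.pairing p = q) (hx : G.colPerm d p = x)
    (hy : G.colPerm d q = y) (hxq : x ≠ q) :
    orbit ((G.flip x y).faceGroup d) x ⊆ {x, p, q, y} := by
  have hpx : G.colPerm d x = p := hx ▸ G.colPerm_involutive d p
  have hqy : G.colPerm d y = q := hy ▸ G.colPerm_involutive d q
  have hqp : G.pairing q = p := hpq ▸ G.invol p
  have hxp : x ≠ p := hx ▸ G.colPerm_ne_self d p
  have hyq : y ≠ q := hy ▸ G.colPerm_ne_self d q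
  have hyp : y ≠ p := fun h => hxq (by rw [← hx, ← h, hqy])
  have hxy : x ≠ y := fun h => G.fixfree p (by rw [hpq, ← hqy, ← h, hpx])
  have hp : p ∉ G.flipEnds x y := by
    simp only [flipEnds, Set.mem_insert_iff, Set.mem_singleton_iff, not_or]
    refine ⟨hxp.symm, fun h => hxq ?_, hyp.symm, fun h => hyq ?_⟩ <;> rw [← hpq, h, G.invol]
  have hq : q ∉ G.flipEnds x y := by
    simp only [flipEnds, Set.mem_insert_iff, Set.mem_singleton_iff, not_or]
    refine ⟨hxq.symm, fun h => hxp ?_, hyq.symm, fun h => hyp ?_⟩ <;> rw [← hqp, h, G.invol]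
  refine orbit_flip_subset ?_ ?_ (Set.mem_insert x _) <;>
    simp only [Set.mem_insert_iff, Set.mem_singleton_iff] <;> rintro u (rfl | rfl | rfl | rfl)
  · exact Or.inr (Or.inr (Or.inr (flip_pairing_left hxy)))
  · exact Or.inr (Or.inr (Or.inl ((flip_pairing_of_not_mem hp).trans hpq)))
  · exact Or.inr (Or.inl ((flip_pairing_of_not_mem hq).trans hqp))
  · exact Or.inl (flip_pairing_right hxy)
  · exact Or.inr (Or.inl hpx)
  · exact Or.inl hx
  · exact Or.inr (Or.inr (Or.inr hy))
  · exact Or.inr (Or.inr (Or.inl hqy))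

lemma numFaces_lt_numFaces_flip (hpq : G.pairing p = q) (hx : G.colPerm d p = x)
    (hy : G.colPerm d q = y) (hxq : x ≠ q) (hxy : G.pairing x ≠ y) :
    G.numFaces d < (G.flip x y).numFaces d := by
  have hsame : G.sameFace d y x := by
    have := colPerm_mem_orbit (pairing_mem_orbit (colPerm_mem_orbit (G := G) (d := d)
      (mem_orbit_self x)))
    rwa [← hx, G.colPerm_involutive, hpq, hy, hx] at this
  refine numFaces_add_one_le_numFaces_flip hsame fun hsplit => ?_
  have hPx_p : G.pairing x ≠ p := fun h => hxq (by rw [← hpq, ← h, G.invol])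
  have hPx_q : G.pairing x ≠ q := fun h => G.colPerm_ne_self d p
    (by rw [hx, ← G.invol x, h, ← hpq, G.invol])
  rcases orbit_flip_subset_of_pairing_eq hpq hx hy hxq hsplit with h | h | h | h
  exacts [G.fixfree x h, hPx_p h, hPx_q h, hxy h]

lemma connected_flip (h : ¬ G.CutDisconnects x y) : (G.flip x y).Connected := by
  rw [CutDisconnects, not_not] at h
  intro u w
  induction h w u with
  | refl => exact mem_orbit_self w
  | tail _ hstep ih =>
    rcases hstep with ⟨d, rfl⟩ | ⟨rfl, hb, -⟩
    · exact apply_mem_orbit_closure (g := (G.flip x y).colPerm d) (Or.inr ⟨d, rfl⟩) ih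
    · rw [← flip_pairing_of_not_mem hb]
      exact apply_mem_orbit_closure (g := (G.flip x y).pairing) (Or.inl rfl) ih

end TGraph

/-- If `G` maximizes the number of faces among connected graphs
with the same number of bubbles and has a proper face of length 2 of color `c`
(through the color-0 edge `{v, pairing v}`), then the remaining four vertices
of the two bubbles visited by this face are pairwise connected by 2-point
functions: for each color `c' ≠ c`, the vertex attached to `v` by a color-`c'`
edge is connected by a 2-point function to the vertex attached to `pairing v`
by a color-`c'` edge. -/
theorem proper_face2_structure (G : TGraph) (hmax : G.MaximizesFaces)
    (c : Fin 3) (v : G.V) (h : G.ProperFace2 c v) :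
    ∀ c' : Fin 3, c' ≠ c →
      G.TwoPoint (G.colPerm c' v) (G.colPerm c' (G.pairing v)) := by
  intro c' hc'
  obtain ⟨⟨-, hface⟩, hvw⟩ := h
  obtain ⟨c'', hc''c, hc''c', hmul⟩ := exists_bubblePerm_mul_eq hc'
  set w := G.pairing v
  set x := G.colPerm c' v
  set y := G.colPerm c' w
  have hbubble : ∀ p q : G.V, p.1 = v.1 → q.1 = w.1 → p ≠ q := fun p q hp hq hpq =>
    hvw (by rw [← hq, ← hpq, hp])
  by_contra hxy
  have hpxy : G.pairing x ≠ y := fun h => hxy (Or.inl h)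
  have hcut : ¬ G.CutDisconnects x y := fun h =>
    hxy (Or.inr ⟨(hbubble x y rfl rfl).symm, hpxy.symm, h⟩)
  have hlt' : G.numFaces c' < (G.flip x y).numFaces c' :=
    numFaces_lt_numFaces_flip rfl rfl rfl (hbubble x w rfl rfl) hpxy
  have hlt'' : G.numFaces c'' < (G.flip x y).numFaces c'' :=
    numFaces_lt_numFaces_flip (p := G.colPerm c v) (q := G.colPerm c w)
      (by rw [← hface, G.invol]) (G.colPerm_colPerm_of_mul_eq hmul v)
      (G.colPerm_colPerm_of_mul_eq hmul w) (hbubble x _ rfl rfl) hpxy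
  have hF : G.F < (G.flip x y).F := by
    have := numFaces_le_numFaces_flip_add_one x y c
    simp only [F, Fin.sum_univ_three_of_ne _ hc'.symm hc''c.symm hc''c'.symm]
    omega
  exact (hmax.2 _ (connected_flip hcut) rfl).not_gt hF
end

section
/- If a connected graph G of the tetrahedral model has a 2-edge-cut {e_L, e_R} of color-0 edges, splitting G into closed graphs G_L and G_R (each obtained by joining the two half-edges on its side into a single color-0 edge), then F(G) = F(G_L) + F(G_R) − 3 and b(G) = b(G_L) + b(G_R). -/
/-!  A combinatorial model of the Feynman graphs of the rank-3 tetrahedral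
(`O(N)^3`) tensor model.

A graph consists of a finite set `B` of bubbles (copies of the tetrahedron
`K_4`); each bubble has four vertices, so the vertex set is `B × Fin 4`.
Inside every bubble the edges of colors `1,2,3` are given once and for all by
the three fixed-point-free involutions of `Fin 4` (the proper 3-edge-coloring
of `K_4`).  The color-0 propagator edges, one per vertex, are encoded by a
fixed-point-free involution `pairing` of the vertex set. -/

open Equiv

open TGraph

open TGraph

/-!
Faces of color `c` are the classes of the equivalence relation generated by the color-0 and
color-`c` edges. Gluing cuts the face of `H` through `p` and the face of `K` through `q` and
reconnects them into a single face, leaving all other faces untouched, so each of the three colors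
loses exactly one face. That a face stays connected after one of its color-0 edges is cut (so
that faces of `H` and `K` remain faces of the glued graph) is a parity argument: both kinds of
edges are perfect matchings.
-/

open Function Relation

theorem Finset.even_card_of_involution {α : Type*} {s : Finset α} (f : α → α)
    (hmaps : ∀ x ∈ s, f x ∈ s) (hinv : ∀ x ∈ s, f (f x) = x) (hfix : ∀ x ∈ s, f x ≠ x) :
    Even s.card := by
  rw [← ZMod.natCast_eq_zero_iff_even, Finset.card_eq_sum_ones, Nat.cast_sum, Nat.cast_one]
  exact Finset.sum_involution (fun x _ => f x) (fun _ _ => by decide)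
    (fun x hx _ => hfix x hx) hmaps hinv

/-- The class of `q` is `s`-stable; if it missed `a q`, removing `q` from it would leave an
`a`-stable set, and since `s` and `a` have no fixed points its cardinality would be both even and
odd. -/
theorem eqvGen_avoiding_edge {α : Type*} [Finite α] {a s : α → α}
    (ha : Involutive a) (hs : Involutive s) (ha' : ∀ x, a x ≠ x) (hs' : ∀ x, s x ≠ x) (q : α) :
    EqvGen (fun x y => y = s x ∨ (x ≠ q ∧ x ≠ a q ∧ y = a x)) q (a q) := by
  classical
  have := Fintype.ofFinite α
  set r := fun x y => y = s x ∨ (x ≠ q ∧ x ≠ a q ∧ y = a x)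
  by_contra hq
  set R : Finset α := {x | EqvGen r q x}
  have hqR : q ∈ R := by simpa [R] using EqvGen.refl q
  have hR_even : Even R.card := by
    refine R.even_card_of_involution s (fun x hx => ?_) (fun x _ => hs x) (fun x _ => hs' x)
    simp only [R, Finset.mem_filter_univ] at hx ⊢
    exact hx.trans _ _ _ (EqvGen.rel _ _ (Or.inl rfl))
  have hR'_even : Even (R.erase q).card := by
    refine (R.erase q).even_card_of_involution a (fun x hx => ?_) (fun x _ => ha x)
      (fun x _ => ha' x)
    simp only [R, Finset.mem_erase, Finset.mem_filter_univ] at hx ⊢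
    have hxa : x ≠ a q := by rintro rfl; exact hq hx.2
    exact ⟨fun h => hxa (by rw [← h, ha]),
      hx.2.trans _ _ _ (EqvGen.rel _ _ (Or.inr ⟨hx.1, hxa, rfl⟩))⟩
  rw [Finset.card_erase_of_mem hqR] at hR'_even
  have hR_pos := Finset.card_pos.2 ⟨q, hqR⟩
  rw [Nat.even_iff] at hR_even hR'_even
  omega

theorem MulAction.orbitRel_closure_iff {G α : Type*} [Group G] [MulAction G α] {S : Set G}
    {x y : α} :
    MulAction.orbitRel (Subgroup.closure S) α x y ↔ EqvGen (fun a b => ∃ g ∈ S, g • a = b) x y := by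
  constructor
  · have key : ∀ g ∈ Subgroup.closure S, ∀ y : α,
        EqvGen (fun a b => ∃ g ∈ S, g • a = b) y (g • y) := by
      intro g hg
      induction hg using Subgroup.closure_induction with
      | mem g hg => exact fun y => EqvGen.rel _ _ ⟨g, hg, rfl⟩
      | one => exact fun y => by simpa using EqvGen.refl y
      | mul g h _ _ ihg ihh =>
        exact fun y => by simpa [mul_smul] using (ihh y).trans _ _ _ (ihg (h • y))
      | inv g _ ih => exact fun y => by simpa using (ih (g⁻¹ • y)).symm
    rintro ⟨⟨g, hg⟩, rfl⟩
    exact (key g hg y).symm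
  · intro h
    induction h with
    | rel a b hab =>
      obtain ⟨g, hg, rfl⟩ := hab
      exact MulAction.mem_orbit_symm.1
        (MulAction.mem_orbit a (⟨g, Subgroup.subset_closure hg⟩ : Subgroup.closure S))
    | refl => exact (MulAction.orbitRel _ α).refl _
    | symm _ _ _ ih => exact (MulAction.orbitRel _ α).symm ih
    | trans _ _ _ _ _ ih₁ ih₂ => exact (MulAction.orbitRel _ α).trans ih₁ ih₂

def Quot.eqvGenEquiv {α : Type*} (r : α → α → Prop) : Quot (EqvGen r) ≃ Quot r where
  toFun := Quot.lift (Quot.mk r) fun _ _ => Quot.eqvGen_sound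
  invFun := Quot.map id fun a b => EqvGen.rel a b
  left_inv := by rintro ⟨a⟩; rfl
  right_inv := by rintro ⟨a⟩; rfl

theorem Nat.card_add_one_of_range_eq_compl {α β : Type*} [Finite β] {f : α → β}
    (hf : Injective f) {b : β} (hrange : Set.range f = {b}ᶜ) : Nat.card α + 1 = Nat.card β := by
  rw [← Nat.card_range_of_injective hf, hrange, Nat.card_coe_set_eq, ← Set.ncard_singleton b,
    add_comm, Set.ncard_add_ncard_compl]

namespace TGraph

variable (G : TGraph) (c : Fin 3)

def faceRel (x y : G.V) : Prop := y = G.pairing x ∨ y = G.colPerm c x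

theorem numFaces_eq_card_quot : G.numFaces c = Nat.card (Quot (G.faceRel c)) := by
  have hrel : (fun a b => ∃ g ∈ ({G.pairing, G.colPerm c} : Set (Perm G.V)), g • a = b) =
      G.faceRel c := by
    ext a b
    simp [faceRel, Perm.smul_def, eq_comm]
  refine Nat.card_congr ((Quot.congrRight fun x y => ?_).trans (Quot.eqvGenEquiv _))
  rw [← hrel]
  exact MulAction.orbitRel_closure_iff

theorem colPerm_involutive_s7 : Involutive (G.colPerm c) := by
  rintro ⟨u, k⟩
  have hk : ∀ j : Fin 4, bubblePerm c (bubblePerm c j) = j := by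
    fin_cases c <;> decide
  simp [colPerm, hk]

theorem colPerm_ne_self_s7 (x : G.V) : G.colPerm c x ≠ x := by
  obtain ⟨u, k⟩ := x
  have hk : ∀ j : Fin 4, bubblePerm c j ≠ j := by
    fin_cases c <;> decide
  simpa [colPerm] using hk k

theorem mk_pairing (x : G.V) : Quot.mk (G.faceRel c) (G.pairing x) = Quot.mk _ x :=
  (Quot.sound (show G.faceRel c x (G.pairing x) from Or.inl rfl)).symm

theorem mk_colPerm (x : G.V) : Quot.mk (G.faceRel c) (G.colPerm c x) = Quot.mk _ x :=
  (Quot.sound (show G.faceRel c x (G.colPerm c x) from Or.inr rfl)).symm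

variable {G c}

/-- The color-0 edge through `v` need not be preserved by `e`: its two endpoints stay joined
through the rest of their face. -/
theorem mk_faceRel_eq_of_map {G' : TGraph} (e : G.V → G'.V) (v : G.V)
    (hcol : ∀ x, G'.colPerm c (e x) = e (G.colPerm c x))
    (hpair : ∀ x, x ≠ v → x ≠ G.pairing v → G'.pairing (e x) = e (G.pairing x))
    {x y : G.V} (h : G.faceRel c x y) :
    Quot.mk (G'.faceRel c) (e x) = Quot.mk (G'.faceRel c) (e y) := by
  have step : ∀ x y, y = G.colPerm c x ∨ (x ≠ v ∧ x ≠ G.pairing v ∧ y = G.pairing x) →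
      Quot.mk (G'.faceRel c) (e x) = Quot.mk (G'.faceRel c) (e y) := by
    rintro x _ (rfl | ⟨hv, hσv, rfl⟩)
    · exact Quot.sound (Or.inr (hcol x).symm)
    · exact Quot.sound (Or.inl (hpair x hv hσv).symm)
  have cut : Quot.mk (G'.faceRel c) (e v) = Quot.mk (G'.faceRel c) (e (G.pairing v)) :=
    congrArg (Quot.lift _ step) <| Quot.eqvGen_sound <|
      eqvGen_avoiding_edge G.invol (G.colPerm_involutive_s7 c) G.fixfree (G.colPerm_ne_self_s7 c) v
  rcases h with rfl | rfl
  · by_cases hv : x = v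
    · rw [hv]; exact cut
    by_cases hσv : x = G.pairing v
    · rw [hσv, G.invol]; exact cut.symm
    exact step _ _ (Or.inr ⟨hv, hσv, rfl⟩)
  · exact step _ _ (Or.inl rfl)

section Glue

variable (H K : TGraph) (p : H.V) (q : K.V) (c : Fin 3)

theorem glue_vertex_cases (z : (glue H K p q).V) :
    (∃ x, z = inlV H K x) ∨ ∃ y, z = inrV H K y := by
  rcases z with ⟨u | u, k⟩
  exacts [Or.inl ⟨(u, k), rfl⟩, Or.inr ⟨(u, k), rfl⟩]

theorem glue_colPerm_inlV (x : H.V) :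
    (glue H K p q).colPerm c (inlV H K x) = inlV H K (H.colPerm c x) := rfl

theorem glue_colPerm_inrV (y : K.V) :
    (glue H K p q).colPerm c (inrV H K y) = inrV H K (K.colPerm c y) := rfl

theorem glue_pairing_inlV {x : H.V} (h₁ : x ≠ p) (h₂ : x ≠ H.pairing p) :
    (glue H K p q).pairing (inlV H K x) = inlV H K (H.pairing x) := by
  show glueFun H K p q (inlV H K x) = _
  rw [glueFun_inlV, if_neg h₁, if_neg h₂]

theorem glue_pairing_inrV {y : K.V} (h₁ : y ≠ q) (h₂ : y ≠ K.pairing q) :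
    (glue H K p q).pairing (inrV H K y) = inrV H K (K.pairing y) := by
  show glueFun H K p q (inrV H K y) = _
  rw [glueFun_inrV, if_neg h₁, if_neg h₂]

def glueFaces : Quot (H.faceRel c) ⊕ Quot (K.faceRel c) → Quot ((glue H K p q).faceRel c) :=
  Sum.elim
    (Quot.lift (fun x => Quot.mk _ (inlV H K x)) fun _ _ =>
      mk_faceRel_eq_of_map _ p (glue_colPerm_inlV H K p q c) fun _ => glue_pairing_inlV H K p q)
    (Quot.lift (fun y => Quot.mk _ (inrV H K y)) fun _ _ =>
      mk_faceRel_eq_of_map _ q (glue_colPerm_inrV H K p q c) fun _ => glue_pairing_inrV H K p q)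

open Classical in
/-- The face of `H` or of `K` through a vertex of the glued graph, with the face of `q` in `K`
identified with the face of `p` in `H`. -/
noncomputable def splitFace (z : (glue H K p q).V) : Quot (H.faceRel c) ⊕ Quot (K.faceRel c) :=
  Sum.elim (fun x => Sum.inl (Quot.mk _ x))
    (fun y => if Quot.mk _ y = Quot.mk (K.faceRel c) q then Sum.inl (Quot.mk _ p)
      else Sum.inr (Quot.mk _ y))
    (Equiv.sumProdDistrib _ _ _ z)

theorem splitFace_inlV (x : H.V) : splitFace H K p q c (inlV H K x) = Sum.inl (Quot.mk _ x) :=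
  rfl

open Classical in
theorem splitFace_inrV (y : K.V) :
    splitFace H K p q c (inrV H K y) = if Quot.mk _ y = Quot.mk (K.faceRel c) q then
      Sum.inl (Quot.mk _ p) else Sum.inr (Quot.mk _ y) :=
  rfl

variable {H K p q c} in
theorem splitFace_eq_of_faceRel {z z' : (glue H K p q).V} (h : (glue H K p q).faceRel c z z') :
    splitFace H K p q c z = splitFace H K p q c z' := by
  rcases glue_vertex_cases H K p q z with ⟨x, rfl⟩ | ⟨y, rfl⟩ <;> rcases h with rfl | rfl
  · change splitFace H K p q c _ = splitFace H K p q c (glueFun H K p q (inlV H K x))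
    rw [glueFun_inlV]
    split_ifs with h₁ h₂
    · simp [splitFace_inlV, splitFace_inrV, h₁]
    · simp [splitFace_inlV, splitFace_inrV, h₂, mk_pairing]
    · simp only [splitFace_inlV, mk_pairing]
  · simp only [glue_colPerm_inlV, splitFace_inlV, mk_colPerm]
  · change splitFace H K p q c _ = splitFace H K p q c (glueFun H K p q (inrV H K y))
    rw [glueFun_inrV]
    split_ifs with h₁ h₂
    · simp [splitFace_inlV, splitFace_inrV, h₁]
    · simp [splitFace_inlV, splitFace_inrV, h₂, mk_pairing]
    · rw [splitFace_inrV, splitFace_inrV, mk_pairing]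
  · rw [glue_colPerm_inrV, splitFace_inrV, splitFace_inrV, mk_colPerm]

noncomputable def splitFaces :
    Quot ((glue H K p q).faceRel c) → Quot (H.faceRel c) ⊕ Quot (K.faceRel c) :=
  Quot.lift (splitFace H K p q c) fun _ _ => splitFace_eq_of_faceRel

theorem leftInverse_glueFaces_splitFaces :
    LeftInverse (glueFaces H K p q c) (splitFaces H K p q c) := by
  rintro ⟨z⟩
  rcases glue_vertex_cases H K p q z with ⟨x, rfl⟩ | ⟨y, rfl⟩
  · rfl
  change glueFaces H K p q c (splitFace H K p q c (inrV H K y)) = _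
  rw [splitFace_inrV]
  split_ifs with hy
  · have hpq : glueFaces H K p q c (Sum.inl (Quot.mk _ p)) =
        glueFaces H K p q c (Sum.inr (Quot.mk _ q)) :=
      Quot.sound (Or.inl (show inrV H K q = glueFun H K p q (inlV H K p) by
        rw [glueFun_inlV, if_pos rfl]))
    rw [hpq, ← hy]
    rfl
  · rfl

theorem range_splitFaces :
    Set.range (splitFaces H K p q c) = {Sum.inr (Quot.mk _ q)}ᶜ := by
  ext t
  constructor
  · rintro ⟨⟨z⟩, rfl⟩
    rcases glue_vertex_cases H K p q z with ⟨x, rfl⟩ | ⟨y, rfl⟩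
    · simp [splitFaces, splitFace_inlV]
    · change splitFace H K p q c (inrV H K y) ≠ _
      rw [splitFace_inrV]
      split_ifs with hy <;> simp [hy]
  · intro ht
    rcases t with ⟨⟨x⟩⟩ | ⟨⟨y⟩⟩
    · exact ⟨Quot.mk _ (inlV H K x), rfl⟩
    · refine ⟨Quot.mk _ (inrV H K y), ?_⟩
      change splitFace H K p q c (inrV H K y) = _
      rw [splitFace_inrV, if_neg (by simpa using ht)]

theorem numFaces_glue :
    (glue H K p q).numFaces c + 1 = H.numFaces c + K.numFaces c := by
  rw [numFaces_eq_card_quot, numFaces_eq_card_quot, numFaces_eq_card_quot, ← Nat.card_sum]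
  exact Nat.card_add_one_of_range_eq_compl
    (leftInverse_glueFaces_splitFaces H K p q c).injective (range_splitFaces H K p q c)

end Glue

end TGraph

theorem glue_faces_bubbles_general (H K : TGraph) (p : H.V) (q : K.V) :
    (glue H K p q).F + 3 = H.F + K.F ∧ (glue H K p q).b = H.b + K.b := by
  refine ⟨?_, Fintype.card_sum⟩
  calc (glue H K p q).F + 3 = ∑ c, ((glue H K p q).numFaces c + 1) := by
        simp [F, Finset.sum_add_distrib]
    _ = ∑ c, (H.numFaces c + K.numFaces c) := by simp only [numFaces_glue]
    _ = H.F + K.F := Finset.sum_add_distrib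

/-- If a connected graph has a 2-edge-cut of color-0 edges,
splitting it into closed connected graphs `G_L` and `G_R` (so that the graph
is the gluing of `G_L` and `G_R` along one color-0 edge of each), then
`F(G) = F(G_L) + F(G_R) - 3` and `b(G) = b(G_L) + b(G_R)`. -/
theorem glue_faces_bubbles (H K : TGraph) (p : H.V) (q : K.V)
    (hH : H.Connected) (hK : K.Connected) :
    (glue H K p q).F + 3 = H.F + K.F ∧ (glue H K p q).b = H.b + K.b :=
  glue_faces_bubbles_general H K p q
end

section
/- For every connected graph G of the rank-3 tetrahedral tensor model, the total number of faces satisfies F(G) ≤ (3/2)b(G) + 3, where b(G) is the number of bubbles. Consequently the degree ω(G) = 3 + (3/2)b(G) − F(G) is a non-negative half-integer, establishing the existence of the 1/N expansion. -/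
/-!  A combinatorial model of the Feynman graphs of the rank-3 tetrahedral
(`O(N)^3`) tensor model.

A graph consists of a finite set `B` of bubbles (copies of the tetrahedron
`K_4`); each bubble has four vertices, so the vertex set is `B × Fin 4`.
Inside every bubble the edges of colors `1,2,3` are given once and for all by
the three fixed-point-free involutions of `Fin 4` (the proper 3-edge-coloring
of `K_4`).  The color-0 propagator edges, one per vertex, are encoded by a
fixed-point-free involution `pairing` of the vertex set. -/

open Equiv

open TGraph

open TGraph

/-! The bound is the jacket bound.  For two distinct colours `d, e`, the colour-`0` edges and
the `d`- and `e`-edges inside the bubbles form a ribbon graph (the jacket) with `b` vertices,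
`2 b` edges and `F_d + F_e` faces, so `b - 2 b + F_d + F_e ≤ 2`.  The jacket need not be
orientable, so we count on its orientation double cover, a map on two copies of the vertex set
with at most two components.  Its Euler characteristic is bounded by the genus inequality
`z(σ) + z(τ) + z(σ τ) ≤ n + 2 c` for permutations `σ, τ` of an `n`-element set generating a
group with `c` orbits (`z` counts cycles), which follows by induction on `n - z(τ)`:
multiplying `τ` by a transposition that splits one of its cycles changes `z(σ τ)` by `±1` and
`c` by at most one.  This gives `F_d + F_e ≤ b + 2` for each of the three pairs of colours, and
summing, `2 F ≤ 3 b + 6`. -/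

open Equiv MulAction Function

namespace Subgroup

theorem closure_pair_mul_sup_zpowers {G : Type*} [Group G] (a b t : G) :
    closure {a, t * b} ⊔ zpowers t = closure {a, b} ⊔ zpowers t := by
  have ht {K : Subgroup G} : t ∈ K ⊔ zpowers t := mem_sup_right (mem_zpowers t)
  have hgen {x y : G} : y ∈ closure {x, y} ⊔ zpowers t :=
    mem_sup_left (subset_closure (by simp))
  have ha {x : G} : a ∈ closure {a, x} ⊔ zpowers t := mem_sup_left (subset_closure (by simp))
  apply le_antisymm <;> refine sup_le (closure_le _ |>.2 ?_) le_sup_right <;>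
    rintro g (rfl | rfl)
  · exact ha
  · exact mul_mem ht hgen
  · exact ha
  · simpa using mul_mem (inv_mem ht) (hgen (x := a) (y := t * g))

theorem zpowers_mul_sup_zpowers {G : Type*} [Group G] (t f : G) :
    zpowers (t * f) ⊔ zpowers t = zpowers f ⊔ zpowers t := by
  simpa [closure_insert_one, ← zpowers_eq_closure] using closure_pair_mul_sup_zpowers 1 f t

end Subgroup

namespace Equiv.Perm

variable {α β X : Type*}

noncomputable def numOrbits (H : Subgroup (Perm α)) : ℕ :=
  Nat.card (orbitRel.Quotient H α)

noncomputable def numCycles (f : Perm α) : ℕ := numOrbits (Subgroup.zpowers f)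

def orbitClass (H : Subgroup (Perm α)) (z : α) : orbitRel.Quotient H α := Quotient.mk'' z

def fiberStabilizer (m : α → X) : Subgroup (Perm α) where
  carrier := {g | ∀ z, m (g z) = m z}
  mul_mem' hg hh z := (hg _).trans (hh z)
  one_mem' _ := rfl
  inv_mem' {g} hg z := by simpa using (hg (g⁻¹ z)).symm

section Orbits

variable {H K : Subgroup (Perm α)}

theorem orbitClass_eq_iff {z w : α} :
    orbitClass H z = orbitClass H w ↔ ∃ g ∈ H, g w = z := by
  rw [orbitClass, orbitClass, Quotient.eq'', orbitRel_apply, mem_orbit_iff]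
  exact ⟨fun ⟨g, hg⟩ => ⟨g, g.2, hg⟩, fun ⟨g, hg, hgw⟩ => ⟨⟨g, hg⟩, hgw⟩⟩

theorem orbitClass_surjective (H : Subgroup (Perm α)) : Surjective (orbitClass H) :=
  Quotient.mk''_surjective

@[simp]
theorem orbitClass_out (q : orbitRel.Quotient H α) : orbitClass H q.out = q :=
  Quotient.out_eq' q

theorem le_fiberStabilizer_orbitClass (H : Subgroup (Perm α)) :
    H ≤ fiberStabilizer (orbitClass H) :=
  fun g hg _ => orbitClass_eq_iff.2 ⟨g, hg, rfl⟩

theorem orbitClass_apply {g : Perm α} (hg : g ∈ H) (z : α) :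
    orbitClass H (g z) = orbitClass H z :=
  le_fiberStabilizer_orbitClass H hg z

theorem apply_eq_of_mem_orbit {m : α → X} (hH : H ≤ fiberStabilizer m) {z w : α}
    (h : z ∈ orbit H w) : m z = m w := by
  obtain ⟨⟨g, hg⟩, rfl⟩ := h
  exact hH hg w

def liftOrbits {m : α → X} (hH : H ≤ fiberStabilizer m) : orbitRel.Quotient H α → X :=
  Quotient.lift m fun _ _ => apply_eq_of_mem_orbit hH

@[simp]
theorem liftOrbits_orbitClass {m : α → X} (hH : H ≤ fiberStabilizer m) (z : α) :
    liftOrbits hH (orbitClass H z) = m z := rfl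

theorem liftOrbits_surjective {m : α → X} (hH : H ≤ fiberStabilizer m) (hm : Surjective m) :
    Surjective (liftOrbits hH) := fun x => by
  obtain ⟨z, rfl⟩ := hm x
  exact ⟨orbitClass H z, rfl⟩

theorem orbitClass_zpowers_eq_iff {f : Perm α} {x y : α} :
    orbitClass (Subgroup.zpowers f) x = orbitClass (Subgroup.zpowers f) y ↔ f.SameCycle y x := by
  simp only [orbitClass_eq_iff, Subgroup.exists_mem_zpowers]
  rfl

theorem orbitClass_eq_of_sameCycle {H : Subgroup (Perm α)} {f : Perm α} (hf : f ∈ H) {x y : α}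
    (h : f.SameCycle x y) : orbitClass H x = orbitClass H y := by
  obtain ⟨k, rfl⟩ := h
  exact (orbitClass_apply (zpow_mem hf k) x).symm

variable [Finite α]

theorem card_le_numOrbits {m : α → X} (hH : H ≤ fiberStabilizer m) (hm : Surjective m) :
    Nat.card X ≤ numOrbits H :=
  Nat.card_le_card_of_surjective _ (liftOrbits_surjective hH hm)

theorem numOrbits_le_card (H : Subgroup (Perm α)) : numOrbits H ≤ Nat.card α :=
  Nat.card_le_card_of_surjective _ (orbitClass_surjective H)

theorem numOrbits_antitone : Antitone (numOrbits (α := α)) := fun _ K h =>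
  card_le_numOrbits (h.trans (le_fiberStabilizer_orbitClass K)) (orbitClass_surjective K)

end Orbits

section Swap

variable [Finite α] [DecidableEq α] {H : Subgroup (Perm α)} {u v : α}

theorem numOrbits_sup_zpowers_swap_of_orbitClass_eq (h : orbitClass H u = orbitClass H v) :
    numOrbits (H ⊔ Subgroup.zpowers (swap u v)) = numOrbits H := by
  refine le_antisymm (numOrbits_antitone le_sup_left)
    (card_le_numOrbits (sup_le (le_fiberStabilizer_orbitClass H) ?_) (orbitClass_surjective H))
  refine Subgroup.zpowers_le.2 fun z => ?_
  rcases eq_or_ne z u with rfl | hu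
  · rw [swap_apply_left, h]
  rcases eq_or_ne z v with rfl | hv
  · rw [swap_apply_right, h]
  · rw [swap_apply_of_ne_of_ne hu hv]

theorem numOrbits_le_numOrbits_sup_zpowers_swap_add_one :
    numOrbits H ≤ numOrbits (H ⊔ Subgroup.zpowers (swap u v)) + 1 := by
  classical
  set H' := H ⊔ Subgroup.zpowers (swap u v)
  let m : α → orbitRel.Quotient H α := fun z =>
    if orbitClass H z = orbitClass H v then orbitClass H u else orbitClass H z
  have hm : H' ≤ fiberStabilizer m := by
    refine sup_le (fun g hg z => by simp only [m, orbitClass_apply hg]) ?_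
    refine Subgroup.zpowers_le.2 fun z => ?_
    rcases eq_or_ne z u with rfl | hu
    · simp [m]
    rcases eq_or_ne z v with rfl | hv
    · simp [m]
    · rw [swap_apply_of_ne_of_ne hu hv]
  have hsurj : Surjective (Option.elim' (orbitClass H v) (liftOrbits hm)) := by
    intro q
    obtain ⟨z, rfl⟩ := orbitClass_surjective H q
    by_cases hz : orbitClass H z = orbitClass H v
    · exact ⟨none, hz.symm⟩
    · exact ⟨some (orbitClass H' z), by simp [m, hz]⟩
  simpa [numOrbits, Finite.card_option] using Nat.card_le_card_of_surjective _ hsurj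

theorem numOrbits_sup_zpowers_swap_add_one_of_orbitClass_ne
    (h : orbitClass H u ≠ orbitClass H v) :
    numOrbits (H ⊔ Subgroup.zpowers (swap u v)) + 1 = numOrbits H := by
  set H' := H ⊔ Subgroup.zpowers (swap u v)
  have hH : H ≤ fiberStabilizer (orbitClass H') :=
    le_sup_left.trans (le_fiberStabilizer_orbitClass H')
  have hmerge : liftOrbits hH (orbitClass H u) = liftOrbits hH (orbitClass H v) := by
    simpa using orbitClass_apply (H := H') (Subgroup.mem_sup_right (Subgroup.mem_zpowers _)) v
  have := Fintype.ofFinite (orbitRel.Quotient H α)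
  have := Fintype.ofFinite (orbitRel.Quotient H' α)
  have hlt := Fintype.card_lt_of_surjective_not_injective _
    (liftOrbits_surjective hH (orbitClass_surjective H')) fun hinj => h (hinj hmerge)
  have hle : numOrbits H ≤ numOrbits H' + 1 := numOrbits_le_numOrbits_sup_zpowers_swap_add_one
  simp only [numOrbits, Nat.card_eq_fintype_card] at hle ⊢
  omega

end Swap

section Cycles

theorem sameCycle_swap_mul_of_not_sameCycle [Finite α] [DecidableEq α] {f : Perm α} {u v : α}
    (h : ¬ f.SameCycle u v) : (swap u v * f).SameCycle u v := by
  set g := swap u v * f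
  have hpow : ∀ k : ℕ, g.SameCycle u ((f ^ k) u) := by
    intro k
    induction k with
    | zero => rfl
    | succ k ih =>
      by_cases hu : (f ^ (k + 1)) u = u
      · rw [hu]
      have hv : (f ^ (k + 1)) u ≠ v := fun hv => h ⟨(k + 1 : ℕ), by rwa [zpow_natCast]⟩
      have hstep : g ((f ^ k) u) = (f ^ (k + 1)) u := by
        rw [Perm.mul_apply, ← Perm.mul_apply f, ← pow_succ', swap_apply_of_ne_of_ne hu hv]
      rw [← hstep]
      exact sameCycle_apply_right.2 ih
  obtain ⟨k, -, hk⟩ := (show f.SameCycle u (f⁻¹ u) from ⟨-1, by simp⟩).exists_pow_eq'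
  have hv : g (f⁻¹ u) = v := by simp [g]
  rw [← hv, ← hk]
  exact sameCycle_apply_right.2 (hpow k)

theorem numCycles_swap_mul_le [Finite α] [DecidableEq α] (f : Perm α) (u v : α) :
    numCycles (swap u v * f) ≤ numCycles f + 1 := by
  calc numCycles (swap u v * f)
      ≤ numOrbits (Subgroup.zpowers (swap u v * f) ⊔ Subgroup.zpowers (swap u v)) + 1 :=
        numOrbits_le_numOrbits_sup_zpowers_swap_add_one
    _ ≤ numCycles f + 1 := by
        rw [Subgroup.zpowers_mul_sup_zpowers]
        exact Nat.add_le_add_right (numOrbits_antitone le_sup_left) 1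

theorem numCycles_swap_mul_add_one [Finite α] [DecidableEq α] {f : Perm α} {u v : α}
    (h : ¬ f.SameCycle u v) : numCycles (swap u v * f) + 1 = numCycles f := by
  have hsplit := numOrbits_sup_zpowers_swap_of_orbitClass_eq
    (orbitClass_zpowers_eq_iff.2 (sameCycle_swap_mul_of_not_sameCycle h).symm)
  have hjoin := numOrbits_sup_zpowers_swap_add_one_of_orbitClass_ne
    (fun h' => h (orbitClass_zpowers_eq_iff.1 h').symm)
  rw [Subgroup.zpowers_mul_sup_zpowers] at hsplit
  rw [numCycles, numCycles, ← hsplit, hjoin]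

theorem numCycles_one [Finite α] : numCycles (1 : Perm α) = Nat.card α := by
  refine (Nat.card_eq_of_bijective _ ⟨fun x y hxy => ?_, orbitClass_surjective _⟩).symm
  obtain ⟨g, hg, rfl⟩ := orbitClass_eq_iff.1 hxy
  rw [Subgroup.zpowers_one_eq_bot, Subgroup.mem_bot] at hg
  rw [hg, Perm.one_apply]

theorem card_le_numCycles_mul [Finite α] {f : Perm α} {m : ℕ} (hm : 0 < m) (hf : f ^ m = 1) :
    Nat.card α ≤ numCycles f * m := by
  have hsurj : Surjective fun p : orbitRel.Quotient (Subgroup.zpowers f) α × Fin m =>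
      (f ^ (p.2 : ℕ)) p.1.out := by
    intro z
    have hz : f.SameCycle (orbitClass _ z).out z :=
      orbitClass_zpowers_eq_iff.1 (orbitClass_out (orbitClass (Subgroup.zpowers f) z)).symm
    obtain ⟨i, hi, hiz⟩ := hz.exists_pow_eq'
    exact ⟨⟨orbitClass _ z, i, hi.trans_le (orderOf_le_of_pow_eq_one hm hf)⟩, hiz⟩
  simpa [numCycles, numOrbits] using Nat.card_le_card_of_surjective _ hsurj

theorem numCycles_add_numCycles_le_numCycles_sumCongr [Finite α] [Finite β]
    (p : Perm α) (q : Perm β) : numCycles p + numCycles q ≤ numCycles (sumCongr p q) := by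
  let m := Sum.map (orbitClass (Subgroup.zpowers p)) (orbitClass (Subgroup.zpowers q))
  have hm : Subgroup.zpowers (sumCongr p q) ≤ fiberStabilizer m := by
    refine Subgroup.zpowers_le.2 ?_
    rintro (x | y)
    · simpa [m] using orbitClass_apply (Subgroup.mem_zpowers p) x
    · simpa [m] using orbitClass_apply (Subgroup.mem_zpowers q) y
  have := card_le_numOrbits hm
    (Sum.map_surjective.2 ⟨orbitClass_surjective _, orbitClass_surjective _⟩)
  rwa [Nat.card_sum] at this

end Cycles

section Faces

theorem two_mul_numOrbits_le [Finite α] {H K : Subgroup (Perm α)} (hHK : H ≤ K) (s : α → α)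
    (hK : ∀ z, orbitClass K (s z) = orbitClass K z)
    (hH : ∀ z, orbitClass H (s z) ≠ orbitClass H z) :
    2 * numOrbits K ≤ numOrbits H := by
  let π := liftOrbits (hHK.trans (le_fiberStabilizer_orbitClass K))
  let Φ : orbitRel.Quotient K α × Bool → orbitRel.Quotient H α := fun p =>
    orbitClass H (bif p.2 then s p.1.out else p.1.out)
  have hπ (p) : π (Φ p) = p.1 := by
    obtain ⟨q, _ | _⟩ := p <;> simp [π, Φ, hK]
  have hinj : Injective Φ := by
    rintro ⟨q, b⟩ ⟨q', b'⟩ h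
    obtain rfl : q = q' := by simpa [hπ] using congrArg π h
    cases b <;> cases b' <;> simp only [Φ, cond_false, cond_true] at h
    · rfl
    · exact absurd h.symm (hH _)
    · exact absurd h (hH _)
    · rfl
  simpa [numOrbits, Nat.card_prod, mul_comm] using Nat.card_le_card_of_injective Φ hinj

/-- `(s * a) ^ k * s` is conjugate to `s` or to `a` according to the parity of `k`. -/
theorem zpow_mul_apply_ne_self {a s : Perm α} (ha : a * a = 1) (hs : s * s = 1)
    (ha' : ∀ z, a z ≠ z) (hs' : ∀ z, s z ≠ z) (k : ℤ) (z : α) :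
    ((s * a) ^ k * s) z ≠ z := by
  have hs_inv : s⁻¹ = s := inv_eq_of_mul_eq_one_right hs
  have hflip (j : ℤ) : (s * a) ^ j * s = s * (s * a) ^ (-j) := by
    have hconj : s * (s * a) * s⁻¹ = (s * a)⁻¹ := by
      rw [mul_inv_rev, hs_inv, inv_eq_of_mul_eq_one_right ha, ← mul_assoc, hs, one_mul]
    rw [zpow_neg, ← inv_zpow, ← hconj, conj_zpow, hs_inv]
    simp only [← mul_assoc, hs, one_mul]
  have hconj_ne (c f : Perm α) (hf : ∀ z, f z ≠ z) : (c * f * c⁻¹) z ≠ z := by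
    intro h
    apply hf (c⁻¹ z)
    rwa [Perm.mul_apply, Perm.mul_apply, ← Perm.eq_inv_iff_eq] at h
  obtain ⟨j, rfl | rfl⟩ := Int.even_or_odd' k
  · have : (s * a) ^ (2 * j) * s = (s * a) ^ j * s * ((s * a) ^ j)⁻¹ := by
      conv_lhs => rw [two_mul, zpow_add, mul_assoc, hflip, zpow_neg]
      rw [mul_assoc]
    exact this ▸ hconj_ne _ s hs'
  · have : (s * a) ^ (2 * j + 1) * s = (s * a) ^ j * s * a * ((s * a) ^ j * s)⁻¹ := by
      calc (s * a) ^ (2 * j + 1) * s = (s * a) ^ j * (s * a * ((s * a) ^ j * s)) := by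
            rw [show 2 * j + 1 = j + 1 + j by ring, zpow_add, zpow_add_one]
            simp only [mul_assoc]
        _ = (s * a) ^ j * s * a * (s * (s * a) ^ (-j)) := by
            rw [← hflip]; simp only [mul_assoc]
        _ = _ := by rw [mul_inv_rev, hs_inv, zpow_neg]
    exact this ▸ hconj_ne _ a ha'

theorem two_mul_numOrbits_closure_pair_le [Finite α] {a s : Perm α} (ha : a * a = 1)
    (hs : s * s = 1) (ha' : ∀ z, a z ≠ z) (hs' : ∀ z, s z ≠ z) :
    2 * numOrbits (Subgroup.closure {a, s}) ≤ numCycles (s * a) := by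
  have ha_mem : a ∈ Subgroup.closure {a, s} := Subgroup.subset_closure (by simp)
  have hs_mem : s ∈ Subgroup.closure {a, s} := Subgroup.subset_closure (by simp)
  refine two_mul_numOrbits_le (Subgroup.zpowers_le.2 (mul_mem hs_mem ha_mem)) s
    (orbitClass_apply hs_mem) fun z h => ?_
  obtain ⟨k, hk⟩ := (orbitClass_zpowers_eq_iff.1 h).symm
  exact zpow_mul_apply_ne_self ha hs ha' hs' k z hk

end Faces

section Euler

variable [Finite α] [DecidableEq α]

theorem numCycles_mul_swap_mul_add_le (σ β : Perm α) (x y : α) :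
    numCycles (σ * (swap x y * β)) + 2 * numOrbits (Subgroup.closure {σ, β}) ≤
      numCycles (σ * β) + 2 * numOrbits (Subgroup.closure {σ, swap x y * β}) + 1 := by
  set H := Subgroup.closure {σ, β}
  have hσ : σ ∈ H := Subgroup.subset_closure (by simp)
  have hβ : β ∈ H := Subgroup.subset_closure (by simp)
  have hsup : numOrbits (H ⊔ Subgroup.zpowers (swap x y)) ≤
      numOrbits (Subgroup.closure {σ, swap x y * β}) := by
    rw [← Subgroup.closure_pair_mul_sup_zpowers]
    exact numOrbits_antitone le_sup_left
  rw [← mul_assoc, mul_swap_eq_swap_mul, mul_assoc]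
  by_cases h : (σ * β).SameCycle (σ x) (σ y)
  · have hxy : orbitClass H x = orbitClass H y := by
      rw [← orbitClass_apply hσ x, ← orbitClass_apply hσ y]
      exact orbitClass_eq_of_sameCycle (mul_mem hσ hβ) h
    have := numOrbits_sup_zpowers_swap_of_orbitClass_eq hxy
    have := numCycles_swap_mul_le (σ * β) (σ x) (σ y)
    omega
  · have := numCycles_swap_mul_add_one h
    have := numOrbits_le_numOrbits_sup_zpowers_swap_add_one (H := H) (u := x) (v := y)
    omega

theorem numCycles_add_numCycles_add_numCycles_mul_le (σ τ : Perm α) :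
    numCycles σ + numCycles τ + numCycles (σ * τ) ≤
      Nat.card α + 2 * numOrbits (Subgroup.closure {σ, τ}) := by
  induction hn : Nat.card α - numCycles τ using Nat.strong_induction_on generalizing τ with
  | _ n ih =>
    by_cases hτ : τ = 1
    · subst hτ
      rw [mul_one, numCycles_one, Set.pair_comm, Subgroup.closure_insert_one,
        ← Subgroup.zpowers_eq_closure, ← numCycles]
      omega
    obtain ⟨x, hx⟩ : ∃ x, τ x ≠ x := not_forall.1 fun h => hτ (Equiv.ext h)
    have hτρ : swap x (τ x) * (swap x (τ x) * τ) = τ := swap_mul_self_mul _ _ _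
    set ρ := swap x (τ x) * τ
    have hρ : numCycles τ + 1 = numCycles ρ := by
      have hfix : ¬ ρ.SameCycle x (τ x) := fun h =>
        hx (h.eq_of_left (by simp [ρ, IsFixedPt])).symm
      simpa [hτρ] using numCycles_swap_mul_add_one hfix
    have hρ_le : numCycles ρ ≤ Nat.card α := numOrbits_le_card _
    have hρ_euler := ih _ (by omega) ρ rfl
    have hstep := numCycles_mul_swap_mul_add_le σ ρ x (τ x)
    rw [hτρ] at hstep
    omega

end Euler

end Equiv.Perm

namespace TGraph

open Equiv.Perm

theorem bubblePerm_mul_self (c : Fin 3) : bubblePerm c * bubblePerm c = 1 := by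
  revert c; decide

theorem bubblePerm_apply_ne (c : Fin 3) (x : Fin 4) : bubblePerm c x ≠ x := by
  revert c x; decide

theorem bubblePerm_mul_of_ne {c d e : Fin 3} (hcd : c ≠ d) (hce : c ≠ e) (hde : d ≠ e) :
    bubblePerm d * bubblePerm e = bubblePerm c := by
  revert c d e; decide

theorem bubblePerm_commute (d e : Fin 3) : Commute (bubblePerm d) (bubblePerm e) := by
  revert d e; unfold Commute SemiconjBy; decide

variable (G : TGraph)

theorem pairing_mul_self : G.pairing * G.pairing = 1 := Equiv.ext G.invol

theorem colPerm_mul (c d : Fin 3) :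
    G.colPerm c * G.colPerm d = (Equiv.refl G.B).prodCongr (bubblePerm c * bubblePerm d) := by
  ext ⟨b, x⟩ <;> rfl

theorem colPerm_mul_self (c : Fin 3) : G.colPerm c * G.colPerm c = 1 := by
  rw [colPerm_mul, bubblePerm_mul_self]; rfl

theorem colPerm_mul_of_ne {c d e : Fin 3} (hcd : c ≠ d) (hce : c ≠ e) (hde : d ≠ e) :
    G.colPerm d * G.colPerm e = G.colPerm c := by
  rw [colPerm_mul, bubblePerm_mul_of_ne hcd hce hde]; rfl

theorem colPerm_apply_ne (c : Fin 3) (v : G.V) : G.colPerm c v ≠ v :=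
  fun h => bubblePerm_apply_ne c v.2 (congrArg Prod.snd h)

/-- `coverRotation d e` and `coverEdge` are the vertex rotation and the edge involution of the
orientation double cover of the jacket of colours `d, e`: `inl v` and `inr v` are the two lifts
of `v`, and the rotation alternates the colours `d` and `e`, so each bubble lifts to two
`4`-cycles. -/
def coverRotation (d e : Fin 3) : Perm (G.V ⊕ G.V) :=
  (Perm.sumCongr (G.colPerm d) (G.colPerm e)).trans (sumComm G.V G.V)

def coverEdge : Perm (G.V ⊕ G.V) :=
  (Perm.sumCongr G.pairing G.pairing).trans (sumComm G.V G.V)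

def coverGroup (d e : Fin 3) : Subgroup (Perm (G.V ⊕ G.V)) :=
  Subgroup.closure {G.coverRotation d e, G.coverEdge}

variable {G}

@[simp] theorem coverRotation_inl (d e : Fin 3) (v : G.V) :
    G.coverRotation d e (.inl v) = .inr (G.colPerm d v) := rfl
@[simp] theorem coverRotation_inr (d e : Fin 3) (v : G.V) :
    G.coverRotation d e (.inr v) = .inl (G.colPerm e v) := rfl
@[simp] theorem coverEdge_inl (v : G.V) : G.coverEdge (.inl v) = .inr (G.pairing v) := rfl
@[simp] theorem coverEdge_inr (v : G.V) : G.coverEdge (.inr v) = .inl (G.pairing v) := rfl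

variable (G)

theorem coverEdge_pow_two : G.coverEdge ^ 2 = 1 := by
  ext (v | v) <;> simp [pow_two, G.invol]

theorem colPerm_mul_colPerm_pow_two (d e : Fin 3) : (G.colPerm d * G.colPerm e) ^ 2 = 1 := by
  have hcomm : Commute (G.colPerm d) (G.colPerm e) := by
    rw [Commute, SemiconjBy, colPerm_mul, colPerm_mul, (bubblePerm_commute d e).eq]
  rw [hcomm.mul_pow, sq, sq, colPerm_mul_self, colPerm_mul_self, one_mul]

theorem coverRotation_pow_four (d e : Fin 3) : G.coverRotation d e ^ 4 = 1 := by
  have hsq : G.coverRotation d e ^ 2 =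
      Perm.sumCongr (G.colPerm e * G.colPerm d) (G.colPerm d * G.colPerm e) := by
    ext (v | v) <;> rfl
  rw [show 4 = 2 * 2 from rfl, pow_mul, hsq, sq, Perm.sumCongr_mul, ← sq, ← sq,
    colPerm_mul_colPerm_pow_two, colPerm_mul_colPerm_pow_two, Perm.sumCongr_one]

theorem coverRotation_mul_coverEdge (d e : Fin 3) :
    G.coverRotation d e * G.coverEdge =
      Perm.sumCongr (G.colPerm e * G.pairing) (G.colPerm d * G.pairing) := by
  ext (v | v) <;> rfl

variable {G}

/-- An edge of colour `0`, `d` or `e` exchanges the two sheets of the cover, an edge of the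
third colour preserves them. -/
theorem fullGroup_le_fiberStabilizer_coverGroup {d e : Fin 3} (hde : d ≠ e) :
    G.fullGroup ≤ fiberStabilizer fun v =>
      s(orbitClass (G.coverGroup d e) (.inl v), orbitClass (G.coverGroup d e) (.inr v)) := by
  have hrot := orbitClass_apply (Subgroup.subset_closure (by simp) :
    G.coverRotation d e ∈ G.coverGroup d e)
  have hedge := orbitClass_apply (Subgroup.subset_closure (by simp) :
    G.coverEdge ∈ G.coverGroup d e)
  refine (Subgroup.closure_le _).2 ?_
  rintro g (rfl | ⟨c, rfl⟩) v
  · have h1 := hedge (.inr v)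
    have h2 := hedge (.inl v)
    simp only [coverEdge_inl, coverEdge_inr] at h1 h2
    exact (congrArg₂ (fun a b => s(a, b)) h1 h2).trans Sym2.eq_swap
  rcases eq_or_ne c d with rfl | hcd
  · have h1 := hrot (.inl (G.colPerm c v))
    have h2 := hrot (.inl v)
    simp only [coverRotation_inl, ← Perm.mul_apply, colPerm_mul_self, Perm.one_apply] at h1 h2
    exact (congrArg₂ (fun a b => s(a, b)) h1.symm h2).trans Sym2.eq_swap
  rcases eq_or_ne c e with rfl | hce
  · have h1 := hrot (.inr v)
    have h2 := hrot (.inr (G.colPerm c v))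
    simp only [coverRotation_inr, ← Perm.mul_apply, colPerm_mul_self, Perm.one_apply] at h1 h2
    exact (congrArg₂ (fun a b => s(a, b)) h1 h2.symm).trans Sym2.eq_swap
  · have h1 := (hrot _).trans (hrot (.inl v))
    have h2 := (hrot _).trans (hrot (.inr v))
    simp only [coverRotation_inl, coverRotation_inr, ← Perm.mul_apply,
      G.colPerm_mul_of_ne hcd hce hde, G.colPerm_mul_of_ne hce hcd hde.symm] at h1 h2
    exact congrArg₂ (fun a b => s(a, b)) h1 h2

theorem numOrbits_coverGroup_le_two (hG : G.Connected) {d e : Fin 3} (hde : d ≠ e) :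
    numOrbits (G.coverGroup d e) ≤ 2 := by
  set H := G.coverGroup d e
  have hm := fullGroup_le_fiberStabilizer_coverGroup (G := G) hde
  rcases isEmpty_or_nonempty G.V with hV | ⟨⟨v₀⟩⟩
  · exact (numOrbits_le_card H).trans (by simp)
  have hclass (z : G.V ⊕ G.V) :
      orbitClass H z ∈ s(orbitClass H (.inl v₀), orbitClass H (.inr v₀)) := by
    obtain v | v := z <;> rw [← apply_eq_of_mem_orbit hm (hG v v₀)]
    exacts [Sym2.mem_mk_left _ _, Sym2.mem_mk_right _ _]
  have hsurj : Surjective fun b : Bool =>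
      bif b then orbitClass H (.inl v₀) else orbitClass H (.inr v₀) := by
    intro q
    obtain ⟨z, rfl⟩ := orbitClass_surjective H q
    obtain h | h := Sym2.mem_iff.1 (hclass z)
    exacts [⟨true, h.symm⟩, ⟨false, h.symm⟩]
  simpa [numOrbits] using Nat.card_le_card_of_surjective _ hsurj

theorem two_mul_numFaces_le (c : Fin 3) :
    2 * G.numFaces c ≤ numCycles (G.colPerm c * G.pairing) :=
  two_mul_numOrbits_closure_pair_le G.pairing_mul_self (G.colPerm_mul_self c) G.fixfree
    (G.colPerm_apply_ne c)

/-- The jacket bound: the orientation double cover of the jacket has `2 b` vertices,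
`4 b` edges, `2 (F_d + F_e)` faces and at most two components. -/
theorem numFaces_add_numFaces_le (hG : G.Connected) {d e : Fin 3} (hde : d ≠ e) :
    G.numFaces d + G.numFaces e ≤ G.b + 2 := by
  have hcard : Nat.card (G.V ⊕ G.V) = 8 * G.b := by
    simp [b, Nat.card_eq_fintype_card]; ring
  have heuler := numCycles_add_numCycles_add_numCycles_mul_le (G.coverRotation d e) G.coverEdge
  have hrot := card_le_numCycles_mul (by norm_num) (G.coverRotation_pow_four d e)
  have hedge := card_le_numCycles_mul (by norm_num) G.coverEdge_pow_two
  have hfaces : 2 * G.numFaces e + 2 * G.numFaces d ≤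
      numCycles (G.coverRotation d e * G.coverEdge) := by
    rw [coverRotation_mul_coverEdge]
    exact (add_le_add (G.two_mul_numFaces_le e) (G.two_mul_numFaces_le d)).trans
      (numCycles_add_numCycles_le_numCycles_sumCongr _ _)
  have hcomp : numOrbits (Subgroup.closure {G.coverRotation d e, G.coverEdge}) ≤ 2 :=
    numOrbits_coverGroup_le_two hG hde
  omega

end TGraph

/-- For every connected graph `G` of the rank-3 tetrahedral
tensor model, `F(G) ≤ (3/2) b(G) + 3`; consequently the degree
`ω(G) = 3 + (3/2) b(G) - F(G)` is a non-negative half-integer, establishing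
the existence of the `1/N` expansion. -/
theorem one_over_N_expansion (G : TGraph) (hG : G.Connected) :
    (G.F : ℚ) ≤ 3 / 2 * G.b + 3 ∧
      0 ≤ (3 : ℚ) + 3 / 2 * G.b - G.F ∧
      ∃ n : ℕ, (3 : ℚ) + 3 / 2 * G.b - G.F = n / 2 := by
  have h01 := G.numFaces_add_numFaces_le hG (show (0 : Fin 3) ≠ 1 by decide)
  have h02 := G.numFaces_add_numFaces_le hG (show (0 : Fin 3) ≠ 2 by decide)
  have h12 := G.numFaces_add_numFaces_le hG (show (1 : Fin 3) ≠ 2 by decide)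
  have hF : 2 * G.F ≤ 3 * G.b + 6 := by
    rw [TGraph.F, Fin.sum_univ_three]
    omega
  have hFq : (2 * G.F : ℚ) ≤ 3 * G.b + 6 := by exact_mod_cast hF
  refine ⟨by linarith, by linarith, 3 * G.b + 6 - 2 * G.F, ?_⟩
  rw [Nat.cast_sub hF]
  push_cast
  ring
end

section
/- A face of length 2 in a graph of the tetrahedral model either visits the same bubble twice — in which case the graph is a one-bubble double tadpole G_1^{(c)} — or visits two distinct bubbles (i.e., is a proper face of length 2). -/
/-!  A combinatorial model of the Feynman graphs of the rank-3 tetrahedral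
(`O(N)^3`) tensor model.

A graph consists of a finite set `B` of bubbles (copies of the tetrahedron
`K_4`); each bubble has four vertices, so the vertex set is `B × Fin 4`.
Inside every bubble the edges of colors `1,2,3` are given once and for all by
the three fixed-point-free involutions of `Fin 4` (the proper 3-edge-coloring
of `K_4`).  The color-0 propagator edges, one per vertex, are encoded by a
fixed-point-free involution `pairing` of the vertex set. -/

open Equiv

open TGraph

open TGraph

/-!
If the two color-0 edges of a face of length 2 stay inside one bubble, they pair the vertices
`a, b` and `σ a, σ b` of that bubble (`σ` the color-`c` matching, `b ∉ {a, σ a}`). These two pairs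
form a perfect matching of `K_4`, i.e. the edges of some color `c'`, so the color-0 edges map the
bubble to itself. By connectedness the bubble is the whole graph, which is then `G_1^{(c')}`.
-/

theorem bubblePerm_involutive (c : Fin 3) : Function.Involutive (bubblePerm c) := by
  intro k
  revert c k
  decide

/-- The matching `{a, b}, {σ a, σ b}` of `K_4` is one of the three colored matchings. -/
theorem exists_bubblePerm_eq_of_pairs {X : Type*} (c : Fin 3) {a b : Fin 4} (hba : b ≠ a)
    (hbσa : b ≠ bubblePerm c a) {f g : Fin 4 → X} (hfa : f a = g b) (hfb : f b = g a)
    (hfσa : f (bubblePerm c a) = g (bubblePerm c b))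
    (hfσb : f (bubblePerm c b) = g (bubblePerm c a)) :
    ∃ c', ∀ k, f k = g (bubblePerm c' k) := by
  have matching : ∀ (c : Fin 3) (a b : Fin 4), b ≠ a → b ≠ bubblePerm c a →
      ∃ c', bubblePerm c' a = b ∧ bubblePerm c' b = a ∧
        bubblePerm c' (bubblePerm c a) = bubblePerm c b ∧
        bubblePerm c' (bubblePerm c b) = bubblePerm c a := by
    decide
  have cover : ∀ (c : Fin 3) (a b k : Fin 4), b ≠ a → b ≠ bubblePerm c a →
      k = a ∨ k = b ∨ k = bubblePerm c a ∨ k = bubblePerm c b := by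
    decide
  obtain ⟨c', h₁, h₂, h₃, h₄⟩ := matching c a b hba hbσa
  refine ⟨c', fun k => ?_⟩
  rcases cover c a b k hba hbσa with rfl | rfl | rfl | rfl
  · rw [hfa, h₁]
  · rw [hfb, h₂]
  · rw [hfσa, h₃]
  · rw [hfσb, h₄]

namespace TGraph

variable {G : TGraph}

theorem pairing_inv : G.pairing⁻¹ = G.pairing := by
  rw [inv_eq_iff_mul_eq_one]
  exact Equiv.ext G.invol

theorem colPerm_inv (c : Fin 3) : (G.colPerm c)⁻¹ = G.colPerm c := by
  rw [inv_eq_iff_mul_eq_one]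
  exact Equiv.ext fun x => Prod.ext rfl (bubblePerm_involutive c x.2)

theorem Connected.fst_eq {β : G.B} (hG : G.Connected) (hβ : ∀ k, (G.pairing (β, k)).1 = β)
    (u : G.V) : u.1 = β := by
  obtain ⟨⟨g, hg⟩, rfl⟩ := hG u (β, 0)
  refine Subgroup.smul_mem_of_mem_closure_of_mem (t := {x : G.V | x.1 = β}) ?_ ?_ hg rfl
  · rintro g (rfl | ⟨c, rfl⟩)
    · simp [pairing_inv]
    · simp [colPerm_inv]
  · rintro g (rfl | ⟨c, rfl⟩) ⟨y, k⟩ (rfl : y = β)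
    exacts [hβ k, rfl]

theorem FaceLen2.exists_pairing_eq_bubblePerm {c : Fin 3} {v : G.V} (h : G.FaceLen2 c v)
    (hv : (G.pairing v).1 = v.1) : ∃ c', ∀ k, G.pairing (v.1, k) = (v.1, bubblePerm c' k) := by
  obtain ⟨β, a⟩ := v
  obtain ⟨hne, hface⟩ := h
  set b := (G.pairing (β, a)).2
  have hpa : G.pairing (β, a) = (β, b) := Prod.ext hv rfl
  have hpσb : G.pairing (β, bubblePerm c b) = (β, bubblePerm c a) := by
    rwa [hpa] at hface
  refine exists_bubblePerm_eq_of_pairs (f := fun k => G.pairing (β, k)) (g := fun k => (β, k))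
    c ?_ ?_ hpa ?_ ?_ ?_
  · exact fun hba => G.fixfree (β, a) (by rw [hpa, hba])
  · exact fun hbσa => hne (by rw [hpa, hbσa]; rfl)
  · rw [← hpa, G.invol]
  · rw [← hpσb, G.invol]
  · exact hpσb

theorem isIso_G1_of_pairing_eq_bubblePerm {β : G.B} {c : Fin 3} (hall : ∀ u : G.V, u.1 = β)
    (hβ : ∀ k, G.pairing (β, k) = (β, bubblePerm c k)) : IsIso G (G1 c) := by
  have hu : ∀ u : G.V, u = (β, u.2) := fun u => Prod.ext (hall u) rfl
  refine ⟨⟨⟨fun x => (show (G1 c).B from (0 : Fin 1), x.2), fun y => (β, y.2),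
    fun x => (hu x).symm, fun y => ?_⟩, ?_, ?_⟩⟩
  · exact Prod.ext (Subsingleton.elim (α := Fin 1) _ _) rfl
  · intro x
    rw [hu x, hβ]
    rfl
  · intro c x
    rfl

end TGraph

/-- A face of length 2 in a connected graph of the tetrahedral
model either visits the same bubble twice — in which case the graph is a
one-bubble double tadpole `G_1^{(c')}` — or visits two distinct bubbles,
i.e. is a proper face of length 2. -/
theorem face_len2_dichotomy (G : TGraph) (hG : G.Connected) (c : Fin 3)
    (v : G.V) (h : G.FaceLen2 c v) :
    ((G.pairing v).1 = v.1 ∧ ∃ c', IsIso G (G1 c')) ∨ G.ProperFace2 c v := by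
  by_cases hv : (G.pairing v).1 = v.1
  · obtain ⟨c', hc'⟩ := h.exists_pairing_eq_bubblePerm hv
    have hall := hG.fst_eq fun k => by rw [hc']
    exact Or.inl ⟨hv, c', isIso_G1_of_pairing_eq_bubblePerm hall hc'⟩
  · exact Or.inr ⟨h, hv⟩
end
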